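/- arXiv:2111.12321 — 3 statements merged into one kernel-verified Lean document; each statement's English description precedes it below -/
import Mathlib

section
/- Let m_1, …, m_N ∈ [m_min, m_max) and let Q, Q^{-1} be quantization and dequantization as defined. Then |Q^{-1}(Σ_{i=1}^N Q(m_i)) - Σ_{i=1}^N m_i| ≤ N · 2^{-w}(m_max - m_min). -/
/-- Total quantization error of the aggregate over `N` clients is at most
`N · 2^{-w}(m_max - m_min)`. -/
theorem aggregate_quantization_error (w N : ℕ) (hw : 1 ≤ w)
    (mmin mmax : ℝ) (hlt : mmin < mmax)
    (m : Fin N → ℝ) (hm : ∀ i, mmin ≤ m i ∧ m i < mmax) :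
    let Q : ℝ → ℤ := fun a => ⌊2 ^ w * (a - mmin) / (mmax - mmin)⌋
    let Qinv : ℤ → ℝ := fun x => ((2 : ℝ) ^ w)⁻¹ * (mmax - mmin) * (x : ℝ) + (N : ℝ) * mmin
    |Qinv (∑ i, Q (m i)) - ∑ i, m i| ≤ (N : ℝ) * (((2 : ℝ) ^ w)⁻¹ * (mmax - mmin)) := by
  intro Q Qinv
  have hpow : (0:ℝ) < (2:ℝ)^w := by positivity
  have hsub : (0:ℝ) < mmax - mmin := sub_pos.mpr hlt
  set c : ℝ := ((2:ℝ)^w)⁻¹ * (mmax - mmin) with hc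
  have hcpos : 0 < c := by positivity
  have key : ∀ i, |c * (Q (m i) : ℝ) - (m i - mmin)| ≤ c := by
    intro i
    set t : ℝ := 2 ^ w * (m i - mmin) / (mmax - mmin) with ht
    have h1 : (Q (m i) : ℝ) ≤ t := Int.floor_le t
    have h2 : t - 1 < (Q (m i) : ℝ) := Int.sub_one_lt_floor t
    have hct : c * t = m i - mmin := by
      rw [hc, ht]; field_simp
    rw [abs_le]
    constructor
    · nlinarith [mul_lt_mul_of_pos_left h2 hcpos]
    · nlinarith [mul_le_mul_of_nonneg_left h1 hcpos.le]
  have heq : Qinv (∑ i, Q (m i)) - ∑ i, m i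
      = ∑ i, (c * (Q (m i) : ℝ) - (m i - mmin)) := by
    simp only [Qinv, Finset.sum_sub_distrib, Finset.sum_const, Finset.card_univ,
      Fintype.card_fin, nsmul_eq_mul, ← Finset.mul_sum]
    push_cast
    ring
  calc |Qinv (∑ i, Q (m i)) - ∑ i, m i|
      = |∑ i, (c * (Q (m i) : ℝ) - (m i - mmin))| := by rw [heq]
    _ ≤ ∑ i, |c * (Q (m i) : ℝ) - (m i - mmin)| := Finset.abs_sum_le_sum_abs _ _
    _ ≤ ∑ _i : Fin N, c := Finset.sum_le_sum fun i _ => key i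
    _ = (N : ℝ) * c := by simp [Finset.sum_const, mul_comm]
end

section
/- Let m_1, …, m_N ∈ [m_min, m_max), and suppose the server recovers x = Σ_{i=1}^N Q(m_i) + e_0 with |e_0| ≤ N - 1. Then |Q^{-1}(x) - Σ_{i=1}^N m_i| ≤ (2N - 1) · 2^{-w}(m_max - m_min). -/
/-- With SHPRG-induced noise `|e₀| ≤ N - 1` on the recovered quantized aggregate, the total
error after dequantization is at most `(2N - 1) · 2^{-w}(m_max - m_min)`. -/
theorem aggregate_error_with_noise (w N : ℕ) (hw : 1 ≤ w) (hN : 1 ≤ N)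
    (mmin mmax : ℝ) (hlt : mmin < mmax)
    (m : Fin N → ℝ) (hm : ∀ i, mmin ≤ m i ∧ m i < mmax)
    (e₀ : ℤ) (he : |e₀| ≤ (N : ℤ) - 1)
    (x : ℤ) (hx : x = (∑ i, ⌊2 ^ w * (m i - mmin) / (mmax - mmin)⌋) + e₀) :
    |(((2 : ℝ) ^ w)⁻¹ * (mmax - mmin) * (x : ℝ) + (N : ℝ) * mmin) - ∑ i, m i|
      ≤ (2 * (N : ℝ) - 1) * (((2 : ℝ) ^ w)⁻¹ * (mmax - mmin)) := by
  have hc : (0:ℝ) < mmax - mmin := by linarith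
  have hp : (0:ℝ) < (2:ℝ) ^ w := by positivity
  set Δ : ℝ := ((2 : ℝ) ^ w)⁻¹ * (mmax - mmin) with hΔ
  have hΔpos : 0 < Δ := by positivity
  set q : Fin N → ℤ := fun i => ⌊2 ^ w * (m i - mmin) / (mmax - mmin)⌋ with hq
  -- per-term bound
  have hterm : ∀ i, |Δ * (q i : ℝ) + mmin - m i| ≤ Δ := by
    intro i
    have hti : Δ * ((2:ℝ) ^ w * (m i - mmin) / (mmax - mmin)) = m i - mmin := by
      rw [hΔ]
      field_simp
    have h1 : ((q i : ℝ)) ≤ 2 ^ w * (m i - mmin) / (mmax - mmin) := Int.floor_le _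
    have h2 : 2 ^ w * (m i - mmin) / (mmax - mmin) - 1 ≤ (q i : ℝ) := by
      have := Int.lt_floor_add_one (2 ^ w * (m i - mmin) / (mmax - mmin))
      push_cast at this ⊢
      linarith
    rw [abs_le]
    constructor
    · nlinarith [mul_le_mul_of_nonneg_left h2 hΔpos.le]
    · nlinarith [mul_le_mul_of_nonneg_left h1 hΔpos.le]
  have key : (((2 : ℝ) ^ w)⁻¹ * (mmax - mmin) * (x : ℝ) + (N : ℝ) * mmin) - ∑ i, m i
      = (∑ i, (Δ * (q i : ℝ) + mmin - m i)) + Δ * (e₀ : ℝ) := by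
    subst hx
    push_cast
    simp only [Finset.sum_sub_distrib, Finset.sum_add_distrib, Finset.mul_sum, mul_add,
      Finset.sum_const, Finset.card_univ, Fintype.card_fin, nsmul_eq_mul]
    push_cast
    ring
  rw [key]
  have h1 : |∑ i, (Δ * (q i : ℝ) + mmin - m i)| ≤ (N : ℝ) * Δ := by
    calc |∑ i, (Δ * (q i : ℝ) + mmin - m i)| ≤ ∑ i, |Δ * (q i : ℝ) + mmin - m i| :=
          Finset.abs_sum_le_sum_abs _ _
      _ ≤ ∑ _i : Fin N, Δ := Finset.sum_le_sum fun i _ => hterm i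
      _ = (N : ℝ) * Δ := by simp [mul_comm]
  have h2 : |Δ * (e₀ : ℝ)| ≤ ((N : ℝ) - 1) * Δ := by
    rw [abs_mul, abs_of_pos hΔpos]
    have : |(e₀ : ℝ)| ≤ (N : ℝ) - 1 := by
      have := he
      rw [← Int.cast_abs]
      push_cast
      exact_mod_cast by exact_mod_cast (by push_cast at this ⊢; exact_mod_cast this : (|e₀| : ℝ) ≤ (N:ℝ) - 1)
    nlinarith
  calc |(∑ i, (Δ * (q i : ℝ) + mmin - m i)) + Δ * (e₀ : ℝ)|
      ≤ |∑ i, (Δ * (q i : ℝ) + mmin - m i)| + |Δ * (e₀ : ℝ)| := abs_add_le _ _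
    _ ≤ (N : ℝ) * Δ + ((N : ℝ) - 1) * Δ := add_le_add h1 h2
    _ = (2 * (N : ℝ) - 1) * Δ := by ring
end

section
/- Suppose at most T clients out of N collude (T ≤ N - 2) and the remaining honest clients' masked values (y_u = m_u + G(k_u) with G(k_u) replaced by independent uniform values, the masks constrained only by their known sum) are observed. Then the conditional distribution of any single honest client's input m_u given the adversary's view is the same as its prior conditional distribution given only Σ_{honest} m_u; i.e., the view determines the honest inputs only up to their sum. -/
/-! Shifting the free masks `P` by the first `h` coordinates of `m - m'` shifts the last,
sum-constrained mask by the last coordinate of `m - m'` as well, because `m - m'` sums to zero.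
This translation is a bijection of the uniformly distributed seeds that carries the view of `m`
to the view of `m'`. -/

open Finset

theorem PMF.map_equiv_uniformOfFintype {α : Type*} [Fintype α] [Nonempty α] (e : α ≃ α) :
    (PMF.uniformOfFintype α).map e = PMF.uniformOfFintype α := by
  ext x
  rw [PMF.map_apply, tsum_eq_single (e.symm x)] <;> simp +contextual [Equiv.eq_symm_apply, eq_comm]

section SnocSubSum

variable {G : Type*} [AddCommGroup G] {n : ℕ}

def snocSubSum (s : G) (P : Fin n → G) : Fin (n + 1) → G :=
  Fin.snoc P (s - ∑ i, P i)

theorem snocSubSum_add_of_sum_eq_zero (s : G) (P : Fin n → G) {d : Fin (n + 1) → G}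
    (hd : ∑ i, d i = 0) : snocSubSum s P + d = snocSubSum s (P + Fin.init d) := by
  have hinit : ∑ i, Fin.init d i = -d (Fin.last n) := by
    rw [Fin.sum_univ_castSucc] at hd
    exact eq_neg_of_add_eq_zero_left hd
  ext u
  refine Fin.lastCases ?_ (fun i => ?_) u
  · simp only [snocSubSum, Pi.add_apply, Fin.snoc_last, sum_add_distrib, hinit]
    abel
  · simp [snocSubSum, Fin.init]

end SnocSubSum

theorem idealized_privacy_up_to_sum_general {G : Type} [AddCommGroup G] [Fintype G] (h : ℕ)
    (zk : G) (m m' : Fin (h + 1) → G) (hsum : ∑ i, m i = ∑ i, m' i) :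
    let mask : (Fin h → G) → Fin (h + 1) → G :=
      fun P => Fin.snoc P (zk - ∑ i : Fin h, P i)
    let view : (Fin (h + 1) → G) → (Fin h → G) → (Fin (h + 1) → G) × G × G :=
      fun mm P => (fun u => mm u + mask P u, zk, ∑ i, mm i)
    PMF.map (view m) (PMF.uniformOfFintype (Fin h → G))
      = PMF.map (view m') (PMF.uniformOfFintype (Fin h → G)) := by
  intro mask view
  have hd : ∑ i, (m - m') i = 0 := by simp [sum_sub_distrib, hsum]
  have hview : view m = view m' ∘ Equiv.addRight (Fin.init (m - m')) := by
    funext P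
    refine Prod.ext ?_ (Prod.ext rfl hsum)
    change m + snocSubSum zk P = m' + snocSubSum zk (P + Fin.init (m - m'))
    rw [← snocSubSum_add_of_sum_eq_zero zk P hd]
    abel
  rw [hview, ← PMF.map_comp, PMF.map_equiv_uniformOfFintype]

/-- In the idealized model (SHPRG outputs replaced by uniform masks constrained only by their
known sum `z_k`), with at most `T ≤ N - 2` colluders and `h + 1 = N - T ≥ 2` honest clients,
the adversary's view `((y_u)_{u honest}, z_k, z_m)` has the same distribution for any two
honest-input tuples with the same sum `z_m`; hence the view determines the honest inputs only
up to their sum, and the conditional distribution of any honest `m_u` given the view equals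
its conditional distribution given `z_m` alone. -/
theorem idealized_privacy_up_to_sum {G : Type} [AddCommGroup G] [Fintype G] [DecidableEq G]
    (N T h : ℕ) (hT : T ≤ N - 2) (hhonest : h + 1 = N - T) (hh : 1 ≤ h)
    (zk : G) (m m' : Fin (h + 1) → G) (hsum : ∑ i, m i = ∑ i, m' i) :
    let mask : (Fin h → G) → Fin (h + 1) → G :=
      fun P => Fin.snoc P (zk - ∑ i : Fin h, P i)
    let view : (Fin (h + 1) → G) → (Fin h → G) → (Fin (h + 1) → G) × G × G :=
      fun mm P => (fun u => mm u + mask P u, zk, ∑ i, mm i)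
    PMF.map (view m) (PMF.uniformOfFintype (Fin h → G))
      = PMF.map (view m') (PMF.uniformOfFintype (Fin h → G)) :=
  idealized_privacy_up_to_sum_general h zk m m' hsum
end
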